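/- Let φ satisfy (A1), α > 0, and suppose f ∈ W(D), i.e. there exists μ ∈ M(Ω) with f(x) = [Nμ](x) for every x ∈ D; let ‖f‖_{W(D)} denote the minimal total variation norm over all such representing measures. If μ̄ is any local minimum of J(μ) = L(μ) + αΦ(μ) in the total variation norm, where L(μ) = (1/2)‖Nμ − y‖²_{L²(D,ν)} for some y ∈ L²(D,ν), then ‖Nμ̄ − f‖²_{L²(D,ν)} ≤ 2α‖f‖_{W(D)} + ‖y − f‖²_{L²(D,ν)}. -/

import Mathlib

/-- Assumption (A1) from the paper for a penalty `φ : [0,∞) → [0,∞)` with derivative `φD`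
and `γ`-convexity constant `γ ≥ 0`: `φ` is concave, nondecreasing, `φ 0 = 0`, has
(one-sided) derivative `φD z` at every `z ≥ 0` with `φD 0 = 1`, `φ z → ∞` as `z → ∞`, and
`0 ≤ φD z₁ - φD z₂ ≤ γ (z₂ - z₁)` for all `0 ≤ z₁ ≤ z₂`. -/
structure A1 (φ φD : ℝ → ℝ) (γ : ℝ) : Prop where
  nonneg : ∀ z, 0 ≤ z → 0 ≤ φ z
  concave : ConcaveOn ℝ (Set.Ici (0 : ℝ)) φ
  mono : MonotoneOn φ (Set.Ici (0 : ℝ))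
  map_zero : φ 0 = 0
  hasDeriv : ∀ z, 0 ≤ z → HasDerivWithinAt φ (φD z) (Set.Ici (0 : ℝ)) z
  deriv_zero : φD 0 = 1
  tendsto_top : Filter.Tendsto φ Filter.atTop Filter.atTop
  gamma_nonneg : 0 ≤ γ
  semiconvex : ∀ z₁ z₂, 0 ≤ z₁ → z₁ ≤ z₂ →
    0 ≤ φD z₁ - φD z₂ ∧ φD z₁ - φD z₂ ≤ γ * (z₂ - z₁)

/-- Assumption (A2) from the paper: there are `γ̂ > 0` and `ẑ > 0` such that
`γ̂ (z₂ - z₁) ≤ φD z₁ - φD z₂` for all `0 ≤ z₁ ≤ z₂ ≤ ẑ`. -/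
def A2 (φD : ℝ → ℝ) (γh zh : ℝ) : Prop :=
  0 < γh ∧ 0 < zh ∧
    ∀ z₁ z₂, 0 ≤ z₁ → z₁ ≤ z₂ → z₂ ≤ zh → γh * (z₂ - z₁) ≤ φD z₁ - φD z₂

open MeasureTheory

/-- Integral of a real function against a finite signed measure, via the Jordan
decomposition. -/
noncomputable def sInt {α : Type*} [MeasurableSpace α]
    (μ : SignedMeasure α) (g : α → ℝ) : ℝ :=
  (∫ x, g x ∂μ.toJordanDecomposition.posPart) -
    ∫ x, g x ∂μ.toJordanDecomposition.negPart

/-- The total variation norm `‖μ‖_{M(Ω)} = |μ|(Ω)` of a finite signed measure. -/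
noncomputable def tvNorm {α : Type*} [MeasurableSpace α] (μ : SignedMeasure α) : ℝ :=
  (μ.totalVariation Set.univ).toReal

/-- The set of atoms of (the total variation of) a signed measure. -/
def atomsOf {α : Type*} [MeasurableSpace α] (μ : SignedMeasure α) : Set α :=
  {ω | μ.totalVariation {ω} ≠ 0}

/-- The nonconvex penalty functional
`Φ(μ) = |μ|(Ω \ atom(μ)) + Σ_{ω ∈ atom(μ)} φ(|μ|({ω}))`. -/
noncomputable def PhiPen {α : Type*} [MeasurableSpace α]
    (φ : ℝ → ℝ) (μ : SignedMeasure α) : ℝ :=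
  (μ.totalVariation (atomsOf μ)ᶜ).toReal +
    ∑' ω : atomsOf μ, φ (μ.totalVariation {(ω : α)}).toReal

/-- The integral neural network `[Nμ](x) = ∫_Ω σ(ω, x) dμ(ω)`. -/
noncomputable def Nnet {α β : Type*} [MeasurableSpace α] (σ : α → β → ℝ)
    (μ : SignedMeasure α) (x : β) : ℝ :=
  sInt μ (fun ω => σ ω x)

/-- The least squares loss `L(μ) = (1/2) ‖Nμ - y‖²_{L²(D,ν)}`. -/
noncomputable def Lloss {α β : Type*} [MeasurableSpace α] [MeasurableSpace β]
    (ν : Measure β) (σ : α → β → ℝ) (y : β → ℝ) (μ : SignedMeasure α) : ℝ :=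
  1 / 2 * ∫ x, (Nnet σ μ x - y x) ^ 2 ∂ν

/-!
Move from `μ̄` towards an arbitrary representing measure `μf` of `f` along the segment
`μ̄ + t (μf - μ̄)`. The network output is affine in `t`, and the penalty grows by at most
`t ‖μf‖`: the total variation of the segment point is dominated by `|μ̄| + t |μf|`, and
`Φ(m) ≤ Φ(m₁) + m₂(Ω)` whenever `m ≤ m₁ + m₂`, because `φ (a + b) ≤ φ a + b` for a
concave `φ` with `φ' ≤ φ'(0) = 1`. Local minimality therefore yields the first-order
condition `2 ⟪u, v⟫ + 2 α ‖μf‖ ≥ 0` for `u = Nμ̄ - y`, `v = f - Nμ̄`, whence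
`‖y - f‖² = ‖u‖² + 2 ⟪u, v⟫ + ‖v‖² ≥ ‖v‖² - 2 α ‖μf‖`. Take the infimum over `μf`.
-/

open Filter Topology Set
open scoped ENNReal NNReal

namespace A1

variable {φ φD : ℝ → ℝ} {γ : ℝ}

lemma map_add_le (h : A1 φ φD γ) {a b : ℝ} (ha : 0 ≤ a) (hb : 0 ≤ b) : φ (a + b) ≤ φ a + b := by
  rcases hb.eq_or_lt with rfl | hb
  · simp
  -- the slope of `φ` on `[a, a + b]` is at most `φD a ≤ φD 0 = 1`
  have hslope : slope φ a (a + b) ≤ φD a :=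
    h.concave.slope_le_of_hasDerivWithinAt ha (by simp; positivity) (by linarith)
      (h.hasDeriv a ha)
  have hD : φD a ≤ 1 := by linarith [(h.semiconvex 0 a le_rfl ha).1, h.deriv_zero]
  rw [slope_def_field, add_sub_cancel_left, div_le_iff₀ hb] at hslope
  nlinarith

lemma le_self (h : A1 φ φD γ) {z : ℝ} (hz : 0 ≤ z) : φ z ≤ z := by
  simpa [h.map_zero] using h.map_add_le le_rfl hz

end A1

section Atoms

variable {α : Type*} [MeasurableSpace α] [MeasurableSingletonClass α]
  {m m₁ m₂ : Measure α} [IsFiniteMeasure m] [IsFiniteMeasure m₁] [IsFiniteMeasure m₂]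

def atomSet (m : Measure α) : Set α := {ω | m {ω} ≠ 0}

noncomputable def atomPenalty (φ : ℝ → ℝ) (m : Measure α) : ℝ :=
  m.real (atomSet m)ᶜ + ∑' ω : atomSet m, φ (m.real {(ω : α)})

omit [MeasurableSingletonClass α] in
lemma phiPen_eq_atomPenalty (φ : ℝ → ℝ) (μ : SignedMeasure α) :
    PhiPen φ μ = atomPenalty φ μ.totalVariation := rfl

variable (m) in
lemma summable_measureReal_singleton : Summable fun ω => m.real {ω} :=
  ENNReal.summable_toReal <| ne_top_of_le_ne_top (measure_ne_top m univ) <|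
    tsum_measure_le_measure_univ (fun ω => (measurableSet_singleton ω).nullMeasurableSet)
      fun _ _ hne => (disjoint_singleton.2 hne).aedisjoint

variable (m) in
lemma countable_atomSet : (atomSet m).Countable := by
  convert (summable_measureReal_singleton m).countable_support using 1
  ext ω
  simp [atomSet, measureReal_eq_zero_iff]

omit [MeasurableSingletonClass α] [IsFiniteMeasure m] in
lemma measure_diff_atomSet {s : Set α} (hs : s.Countable) : m (s \ atomSet m) = 0 := by
  rw [← biUnion_of_singleton (s \ atomSet m), measure_biUnion_null_iff (hs.mono sdiff_subset)]
  exact fun ω hω => not_not.1 hω.2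

lemma tsum_measureReal_singleton {s : Set α} (hs : s.Countable) :
    ∑' ω : s, m.real {(ω : α)} = m.real s := by
  simp only [measureReal_def]
  rw [← ENNReal.tsum_toReal_eq fun _ => measure_ne_top m _,
    ← measure_biUnion hs (fun a _ b _ hab => disjoint_singleton.2 hab)
      (fun ω _ => measurableSet_singleton ω), biUnion_of_singleton]

variable {φ φD : ℝ → ℝ} {γ : ℝ}

variable (m) in
lemma A1.summable_map_measureReal_singleton (h : A1 φ φD γ) :
    Summable fun ω => φ (m.real {ω}) :=
  (summable_measureReal_singleton m).of_nonneg_of_le (fun _ => h.nonneg _ measureReal_nonneg)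
    fun _ => h.le_self measureReal_nonneg

omit [IsFiniteMeasure m] in
lemma measureReal_compl_atomSet_le (h : m ≤ m₁ + m₂) :
    m.real (atomSet m)ᶜ ≤ m₁.real (atomSet m₁)ᶜ + m₂.real (atomSet m)ᶜ := by
  set A := atomSet m
  set B := atomSet m₁
  have hAB : m (Aᶜ ∩ B) = 0 := by
    rw [inter_comm]
    exact measure_diff_atomSet (countable_atomSet m₁)
  have hle : m Aᶜ ≤ m₁ Bᶜ + m₂ Aᶜ := calc
    m Aᶜ = m (Aᶜ \ B) := (measure_sdiff_null' hAB).symm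
    _ ≤ m₁ (Aᶜ \ B) + m₂ (Aᶜ \ B) := Measure.le_iff'.1 h _
    _ ≤ m₁ Bᶜ + m₂ Aᶜ := by
        gcongr
        · exact fun ω hω => hω.2
        · exact sdiff_subset
  rw [measureReal_def, measureReal_def, measureReal_def,
    ← ENNReal.toReal_add (measure_ne_top _ _) (measure_ne_top _ _)]
  exact ENNReal.toReal_mono (by finiteness) hle

lemma A1.tsum_atomSet_le (hφ : A1 φ φD γ) (h : m ≤ m₁ + m₂) :
    ∑' ω : atomSet m, φ (m.real {(ω : α)}) ≤
      ∑' ω : atomSet m₁, φ (m₁.real {(ω : α)}) + m₂.real (atomSet m) := by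
  set A := atomSet m
  have hpt (ω : α) : φ (m.real {ω}) ≤ φ (m₁.real {ω}) + m₂.real {ω} := calc
    φ (m.real {ω}) ≤ φ (m₁.real {ω} + m₂.real {ω}) := by
      refine hφ.mono measureReal_nonneg (add_nonneg measureReal_nonneg measureReal_nonneg) ?_
      rw [← measureReal_add_apply]
      exact ENNReal.toReal_mono (measure_ne_top _ _) (Measure.le_iff'.1 h _)
    _ ≤ φ (m₁.real {ω}) + m₂.real {ω} := hφ.map_add_le measureReal_nonneg measureReal_nonneg
  have hsum₁ := hφ.summable_map_measureReal_singleton m₁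
  have hsum₁A : Summable fun ω : A => φ (m₁.real {(ω : α)}) := hsum₁.subtype A
  have hsum₂A : Summable fun ω : A => m₂.real {(ω : α)} :=
    (summable_measureReal_singleton m₂).subtype A
  calc ∑' ω : A, φ (m.real {(ω : α)})
      ≤ ∑' ω : A, (φ (m₁.real {(ω : α)}) + m₂.real {(ω : α)}) :=
        (hφ.summable_map_measureReal_singleton m).subtype A |>.tsum_le_tsum (fun ω => hpt ω)
          (hsum₁A.add hsum₂A)
    _ = ∑' ω : A, φ (m₁.real {(ω : α)}) + m₂.real A := by
        rw [hsum₁A.tsum_add hsum₂A, tsum_measureReal_singleton (countable_atomSet m)]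
    _ ≤ ∑' ω : atomSet m₁, φ (m₁.real {(ω : α)}) + m₂.real A := by
        gcongr
        rw [tsum_subtype_eq_of_support_subset (f := fun ω => φ (m₁.real {ω})) (s := atomSet m₁)]
        · exact hsum₁.tsum_subtype_le _ A fun _ => hφ.nonneg _ measureReal_nonneg
        · intro ω hω hm
          exact hω (by simp [measureReal_def, hm, hφ.map_zero])

lemma A1.atomPenalty_le_add (hφ : A1 φ φD γ) (h : m ≤ m₁ + m₂) :
    atomPenalty φ m ≤ atomPenalty φ m₁ + m₂.real univ := by
  have hcompl := measureReal_compl (μ := m₂) (countable_atomSet m).measurableSet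
  have := measureReal_compl_atomSet_le h
  have := hφ.tsum_atomSet_le h
  unfold atomPenalty
  linarith

end Atoms

section SignedMeasure

variable {α : Type*} [MeasurableSpace α]

lemma totalVariation_smul (c : ℝ) (μ : SignedMeasure α) :
    (c • μ).totalVariation = ‖c‖₊ • μ.totalVariation := by
  simp only [SignedMeasure.totalVariation_eq_variation, VectorMeasure.variation_smul]

lemma totalVariation_add_le (μ ν : SignedMeasure α) :
    (μ + ν).totalVariation ≤ μ.totalVariation + ν.totalVariation := by
  simp only [SignedMeasure.totalVariation_eq_variation, VectorMeasure.variation_add_le]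

lemma tvNorm_smul (c : ℝ) (μ : SignedMeasure α) : tvNorm (c • μ) = |c| * tvNorm μ := by
  rw [tvNorm, totalVariation_smul, Measure.smul_apply, ENNReal.toReal_smul, tvNorm,
    NNReal.smul_def, smul_eq_mul, coe_nnnorm, Real.norm_eq_abs]

lemma totalVariation_add_smul_sub_le (μ ν : SignedMeasure α) {t : ℝ} (ht0 : 0 ≤ t)
    (ht1 : t ≤ 1) :
    (μ + t • (ν - μ)).totalVariation ≤ μ.totalVariation + ‖t‖₊ • ν.totalVariation := by
  have hconv : μ + t • (ν - μ) = (1 - t) • μ + t • ν := by module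
  have hshrink : ‖1 - t‖₊ • μ.totalVariation ≤ μ.totalVariation := by
    refine Measure.le_iff'.2 fun s => ?_
    rw [Measure.smul_apply, ENNReal.smul_def, smul_eq_mul]
    refine mul_le_of_le_one_left' ?_
    rw [ENNReal.coe_le_one_iff, ← NNReal.coe_le_one, coe_nnnorm, Real.norm_eq_abs,
      abs_of_nonneg (by linarith)]
    linarith
  calc (μ + t • (ν - μ)).totalVariation
      ≤ ((1 - t) • μ).totalVariation + (t • ν).totalVariation := by
        rw [hconv]; exact totalVariation_add_le _ _
    _ ≤ μ.totalVariation + ‖t‖₊ • ν.totalVariation := by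
        rw [totalVariation_smul, totalVariation_smul]; gcongr

lemma A1.phiPen_add_smul_sub_le [MeasurableSingletonClass α] {φ φD : ℝ → ℝ} {γ : ℝ}
    (hφ : A1 φ φD γ) (μ ν : SignedMeasure α) {t : ℝ} (ht0 : 0 ≤ t) (ht1 : t ≤ 1) :
    PhiPen φ (μ + t • (ν - μ)) ≤ PhiPen φ μ + t * tvNorm ν := by
  have h := hφ.atomPenalty_le_add (totalVariation_add_smul_sub_le μ ν ht0 ht1)
  rwa [measureReal_def, Measure.smul_apply, ENNReal.toReal_smul, NNReal.smul_def, coe_nnnorm,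
    Real.norm_eq_abs, abs_of_nonneg ht0, smul_eq_mul, ← phiPen_eq_atomPenalty,
    ← phiPen_eq_atomPenalty] at h

lemma sInt_eq_integral (μ : SignedMeasure α) {g : α → ℝ} (hg : Integrable g μ.totalVariation) :
    sInt μ g = ∫ᵛ x, g x ∂<•μ := by
  have hp : Integrable g μ.toJordanDecomposition.posPart :=
    hg.mono_measure (Measure.le_add_right le_rfl)
  have hn : Integrable g μ.toJordanDecomposition.negPart :=
    hg.mono_measure (Measure.le_add_left le_rfl)
  conv_rhs => rw [← μ.toSignedMeasure_toJordanDecomposition]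
  rw [JordanDecomposition.toSignedMeasure, VectorMeasure.integral_sub_vectorMeasure,
    VectorMeasure.integral_toSignedMeasure, VectorMeasure.integral_toSignedMeasure, sInt]
  · rw [VectorMeasure.Integrable, Measure.variation_toSignedMeasure]; exact hp
  · rw [VectorMeasure.Integrable, Measure.variation_toSignedMeasure]; exact hn

lemma sInt_add_smul_sub (μ ν : SignedMeasure α) (t : ℝ) {g : α → ℝ} (hg : StronglyMeasurable g)
    {C : ℝ} (hC : ∀ x, ‖g x‖ ≤ C) :
    sInt (μ + t • (ν - μ)) g = sInt μ g + t * (sInt ν g - sInt μ g) := by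
  have hint (ρ : SignedMeasure α) : Integrable g ρ.totalVariation :=
    .of_bound hg.aestronglyMeasurable C (ae_of_all _ hC)
  have hint' (ρ : SignedMeasure α) : ρ.Integrable g := by
    rw [VectorMeasure.Integrable, ← SignedMeasure.totalVariation_eq_variation]; exact hint ρ
  rw [sInt_eq_integral _ (hint _), sInt_eq_integral _ (hint _), sInt_eq_integral _ (hint _),
    VectorMeasure.integral_add_vectorMeasure (hint' _) (hint' _),
    VectorMeasure.integral_smul_vectorMeasure,
    VectorMeasure.integral_sub_vectorMeasure (hint' _) (hint' _), smul_eq_mul]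

lemma norm_sInt_le (μ : SignedMeasure α) {g : α → ℝ} {C : ℝ} (hC : ∀ x, ‖g x‖ ≤ C) :
    ‖sInt μ g‖ ≤ C * tvNorm μ := by
  have hp := norm_integral_le_of_norm_le_const (μ := μ.toJordanDecomposition.posPart)
    (ae_of_all _ hC)
  have hn := norm_integral_le_of_norm_le_const (μ := μ.toJordanDecomposition.negPart)
    (ae_of_all _ hC)
  have htv : tvNorm μ = μ.toJordanDecomposition.posPart.real univ +
      μ.toJordanDecomposition.negPart.real univ := by
    rw [tvNorm, SignedMeasure.totalVariation, ← measureReal_def, measureReal_add_apply]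
  rw [htv, mul_add]
  exact (norm_sub_le _ _).trans (add_le_add hp hn)

end SignedMeasure

section Network

variable {α β : Type*} [MeasurableSpace α] [MeasurableSpace β] {σ : α → β → ℝ} {env : β → ℝ}

lemma stronglyMeasurable_nnet (hσ : StronglyMeasurable (Function.uncurry σ))
    (μ : SignedMeasure α) : StronglyMeasurable (Nnet σ μ) := by
  have hσ' : StronglyMeasurable fun q : β × α => σ q.2 q.1 := hσ.comp_measurable measurable_swap
  exact hσ'.integral_prod_right'.sub hσ'.integral_prod_right'

lemma nnet_add_smul_sub (hσ : StronglyMeasurable (Function.uncurry σ))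
    (henv : ∀ ω x, ‖σ ω x‖ ≤ env x) (μ ν : SignedMeasure α) (t : ℝ) (x : β) :
    Nnet σ (μ + t • (ν - μ)) x = Nnet σ μ x + t * (Nnet σ ν x - Nnet σ μ x) :=
  sInt_add_smul_sub μ ν t (hσ.comp_measurable (measurable_id.prodMk measurable_const))
    (fun ω => henv ω x)

lemma memLp_nnet {ν : Measure β} (hσ : StronglyMeasurable (Function.uncurry σ))
    (henv : ∀ ω x, ‖σ ω x‖ ≤ env x) (henv2 : MemLp env 2 ν) (μ : SignedMeasure α) :
    MemLp (Nnet σ μ) 2 ν :=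
  (henv2.const_mul (tvNorm μ)).of_le (stronglyMeasurable_nnet hσ μ).aestronglyMeasurable
    (ae_of_all _ fun x => (norm_sInt_le μ fun ω => henv ω x).trans
      ((mul_comm _ _).le.trans (le_abs_self _)))

end Network

lemma exists_memLp_envelope {E F : Type*} [NormedAddCommGroup E] [NormedAddCommGroup F]
    [MeasurableSpace F] [OpensMeasurableSpace F] {Ω : Set E} (hΩ : Bornology.IsBounded Ω)
    {D : Set F} {ν : Measure D} (hmom : Integrable (fun x : D => ‖(x : F)‖ ^ 2) ν)
    {σ : Ω → D → ℝ} (hσ : ∀ ω, MemLp (σ ω) 2 ν) {Λ : ℝ}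
    (hLip : ∀ (ω₁ ω₂ : Ω) (x : D),
      |σ ω₁ x - σ ω₂ x| ≤ Λ * ‖(x : F)‖ * ‖(ω₁ : E) - (ω₂ : E)‖) :
    ∃ env : D → ℝ, MemLp env 2 ν ∧ ∀ ω x, ‖σ ω x‖ ≤ env x := by
  rcases isEmpty_or_nonempty Ω with hempty | ⟨⟨ω₀⟩⟩
  · exact ⟨0, MemLp.zero, fun ω => isEmptyElim ω⟩
  obtain ⟨r, hr⟩ := hΩ.subset_closedBall (ω₀ : E)
  have hnorm : MemLp (fun x : D => ‖(x : F)‖) 2 ν :=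
    (memLp_two_iff_integrable_sq continuous_subtype_val.norm.aestronglyMeasurable).2 hmom
  refine ⟨fun x => ‖σ ω₀ x‖ + |Λ| * r * ‖(x : F)‖, (hσ ω₀).norm.add (hnorm.const_mul _),
    fun ω x => ?_⟩
  have hdist : ‖(ω : E) - ω₀‖ ≤ r := mem_closedBall_iff_norm.1 (hr ω.2)
  have hr0 : 0 ≤ r := (norm_nonneg _).trans hdist
  calc ‖σ ω x‖ ≤ ‖σ ω₀ x‖ + |σ ω x - σ ω₀ x| := norm_le_norm_add_norm_sub' _ _
    _ ≤ ‖σ ω₀ x‖ + |Λ| * r * ‖(x : F)‖ := by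
        gcongr
        calc |σ ω x - σ ω₀ x| ≤ Λ * ‖(x : F)‖ * ‖(ω : E) - ω₀‖ := hLip ω ω₀ x
          _ ≤ |Λ| * ‖(x : F)‖ * r := by gcongr; exact le_abs_self Λ
          _ = |Λ| * r * ‖(x : F)‖ := by ring

lemma nonneg_of_eventually_nonneg_mul_add_sq {b c : ℝ}
    (h : ∀ᶠ t in 𝓝[>] (0 : ℝ), 0 ≤ t * b + t ^ 2 * c) : 0 ≤ b := by
  have hlim : Tendsto (fun t => b + t * c) (𝓝[>] 0) (𝓝 b) :=
    ((continuous_const.add (continuous_id.mul continuous_const)).tendsto' 0 b (by simp)).mono_left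
      nhdsWithin_le_nhds
  refine ge_of_tendsto hlim ?_
  filter_upwards [h, self_mem_nhdsWithin] with t ht (htpos : 0 < t)
  nlinarith

section L2

variable {β : Type*} [MeasurableSpace β] {ν : Measure β} {u v : β → ℝ}

lemma integral_add_mul_sq (hu : MemLp u 2 ν) (hv : MemLp v 2 ν) (t : ℝ) :
    ∫ x, (u x + t * v x) ^ 2 ∂ν =
      ∫ x, u x ^ 2 ∂ν + 2 * t * ∫ x, u x * v x ∂ν + t ^ 2 * ∫ x, v x ^ 2 ∂ν := by
  have huv : Integrable (fun x => u x * v x) ν := hu.integrable_mul hv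
  have hexpand : (fun x => (u x + t * v x) ^ 2) =
      fun x => u x ^ 2 + 2 * t * (u x * v x) + t ^ 2 * v x ^ 2 := by
    ext x; ring
  have h₁ : Integrable (fun x => u x ^ 2 + 2 * t * (u x * v x)) ν :=
    hu.integrable_sq.add (huv.const_mul _)
  rw [hexpand, integral_add h₁ (hv.integrable_sq.const_mul _),
    integral_add hu.integrable_sq (huv.const_mul _), integral_const_mul, integral_const_mul]

lemma integral_sq_le_of_eventually_le {M : ℝ} (hu : MemLp u 2 ν) (hv : MemLp v 2 ν)
    (h : ∀ᶠ t in 𝓝[>] (0 : ℝ),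
      ∫ x, u x ^ 2 ∂ν ≤ ∫ x, (u x + t * v x) ^ 2 ∂ν + t * M) :
    ∫ x, v x ^ 2 ∂ν ≤ M + ∫ x, (u x + v x) ^ 2 ∂ν := by
  have hfirst : 0 ≤ 2 * ∫ x, u x * v x ∂ν + M := by
    refine nonneg_of_eventually_nonneg_mul_add_sq (c := ∫ x, v x ^ 2 ∂ν) ?_
    filter_upwards [h] with t ht
    rw [integral_add_mul_sq hu hv] at ht
    linarith
  have hu2 : 0 ≤ ∫ x, u x ^ 2 ∂ν := integral_nonneg fun x => sq_nonneg _
  have := integral_add_mul_sq hu hv 1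
  simp only [one_mul] at this
  linarith

end L2

section LocalMin

variable {α β : Type*} [MeasurableSpace α] [MeasurableSpace β]

lemma eventually_tvNorm_add_smul_sub_le (μ μ' : SignedMeasure α) {ε : ℝ} (hε : 0 < ε) :
    ∀ᶠ t in 𝓝[>] (0 : ℝ), tvNorm (μ + t • (μ' - μ) - μ) ≤ ε ∧ t ≤ 1 := by
  have hlim : Tendsto (fun t : ℝ => |t| * tvNorm (μ' - μ)) (𝓝[>] 0) (𝓝 0) := by
    have : Tendsto (fun t : ℝ => |t| * tvNorm (μ' - μ)) (𝓝 0) (𝓝 (|0| * tvNorm (μ' - μ))) :=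
      (continuous_abs.mul continuous_const).tendsto 0
    simpa using this.mono_left nhdsWithin_le_nhds
  filter_upwards [hlim.eventually (ge_mem_nhds hε), Ioc_mem_nhdsGT one_pos] with t ht ht1
  refine ⟨?_, ht1.2⟩
  rwa [add_sub_cancel_left, tvNorm_smul]

lemma integral_sq_sub_le_of_isLocalMin [MeasurableSingletonClass α] {ν : Measure β}
    {σ : α → β → ℝ} {env y : β → ℝ} {φ φD : ℝ → ℝ} {γ a : ℝ}
    (hσ : StronglyMeasurable (Function.uncurry σ))
    (henv : ∀ ω x, ‖σ ω x‖ ≤ env x) (henv2 : MemLp env 2 ν) (hy : MemLp y 2 ν)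
    (hφ : A1 φ φD γ) (ha : 0 ≤ a) {μbar : SignedMeasure α}
    (hloc : ∃ ε > 0, ∀ μ : SignedMeasure α, tvNorm (μ - μbar) ≤ ε →
      Lloss ν σ y μbar + a * PhiPen φ μbar ≤ Lloss ν σ y μ + a * PhiPen φ μ)
    (μf : SignedMeasure α) :
    ∫ x, (Nnet σ μbar x - Nnet σ μf x) ^ 2 ∂ν ≤
      2 * a * tvNorm μf + ∫ x, (y x - Nnet σ μf x) ^ 2 ∂ν := by
  obtain ⟨ε, hε, hmin⟩ := hloc
  set g := Nnet σ μbar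
  set f := Nnet σ μf
  have hg : MemLp g 2 ν := memLp_nnet hσ henv henv2 μbar
  have hf : MemLp f 2 ν := memLp_nnet hσ henv henv2 μf
  have hsegment : ∀ᶠ t in 𝓝[>] (0 : ℝ), ∫ x, (g x - y x) ^ 2 ∂ν ≤
      ∫ x, ((g x - y x) + t * (f x - g x)) ^ 2 ∂ν + t * (2 * a * tvNorm μf) := by
    filter_upwards [eventually_tvNorm_add_smul_sub_le μbar μf hε, self_mem_nhdsWithin]
      with t ⟨hclose, ht1⟩ (ht0 : 0 < t)
    have hJ := hmin _ hclose
    have hΦ := hφ.phiPen_add_smul_sub_le μbar μf ht0.le ht1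
    have hL : Lloss ν σ y (μbar + t • (μf - μbar)) =
        1 / 2 * ∫ x, ((g x - y x) + t * (f x - g x)) ^ 2 ∂ν := by
      simp only [Lloss, nnet_add_smul_sub hσ henv]
      congr 2; ext x; ring
    rw [hL, Lloss] at hJ
    nlinarith [mul_le_mul_of_nonneg_left hΦ ha]
  convert integral_sq_le_of_eventually_le (hg.sub hy) (hf.sub hg) hsegment using 3 with x
  · simp only [Pi.sub_apply]; ring
  · ext x; simp only [Pi.sub_apply]; ring

end LocalMin

theorem local_min_fidelity_estimate_general (d : ℕ)
    (Ω : Set (EuclideanSpace ℝ (Fin (d + 1)))) (hΩ : IsCompact Ω)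
    (D : Set (EuclideanSpace ℝ (Fin d)))
    (ν : Measure ↥D)
    (hmom : Integrable (fun x : ↥D => ‖(x : EuclideanSpace ℝ (Fin d))‖ ^ 2) ν)
    (σ : ↥Ω → ↥D → ℝ)
    (hσcont : Continuous fun p : ↥Ω × ↥D => σ p.1 p.2)
    (Λ : ℝ)
    (hLip : ∀ (ω₁ ω₂ : ↥Ω) (x : ↥D),
      |σ ω₁ x - σ ω₂ x| ≤ Λ * ‖(x : EuclideanSpace ℝ (Fin d))‖ *
        ‖(ω₁ : EuclideanSpace ℝ (Fin (d + 1))) - (ω₂ : EuclideanSpace ℝ (Fin (d + 1)))‖)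
    (hbdd : ∃ C : ℝ, ∀ ω : ↥Ω, eLpNorm (σ ω) 2 ν ≤ ENNReal.ofReal C)
    (y : ↥D → ℝ) (hy : MemLp y 2 ν)
    (φ φD : ℝ → ℝ) (γ : ℝ) (hA1 : A1 φ φD γ)
    (α : ℝ) (hα : 0 < α)
    (f : ↥D → ℝ)
    (hrep : ∃ μf : SignedMeasure ↥Ω, ∀ x : ↥D, Nnet σ μf x = f x)
    (μbar : SignedMeasure ↥Ω)
    (hloc : ∃ ε > 0, ∀ μ : SignedMeasure ↥Ω, tvNorm (μ - μbar) ≤ ε →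
      Lloss ν σ y μbar + α * PhiPen φ μbar ≤ Lloss ν σ y μ + α * PhiPen φ μ) :
    ∫ x, (Nnet σ μbar x - f x) ^ 2 ∂ν ≤
      2 * α * sInf (tvNorm '' {μf : SignedMeasure ↥Ω | ∀ x : ↥D, Nnet σ μf x = f x}) +
        ∫ x, (y x - f x) ^ 2 ∂ν := by
  set S := tvNorm '' {μf : SignedMeasure ↥Ω | ∀ x : ↥D, Nnet σ μf x = f x}
  obtain ⟨C, hC⟩ := hbdd
  have hσL2 (ω : Ω) : MemLp (σ ω) 2 ν :=
    ⟨(hσcont.comp (continuous_const.prodMk continuous_id)).aestronglyMeasurable,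
      (hC ω).trans_lt ENNReal.ofReal_lt_top⟩
  obtain ⟨env, henv2, henv⟩ := exists_memLp_envelope hΩ.isBounded hmom hσL2 hLip
  have hfidelity : ∀ b ∈ S,
      (∫ x, (Nnet σ μbar x - f x) ^ 2 ∂ν - ∫ x, (y x - f x) ^ 2 ∂ν) / (2 * α) ≤ b := by
    rintro _ ⟨μf, hμf : ∀ x, Nnet σ μf x = f x, rfl⟩
    have := integral_sq_sub_le_of_isLocalMin hσcont.stronglyMeasurable henv henv2 hy hA1 hα.le
      hloc μf
    simp only [hμf] at this
    rw [div_le_iff₀ (by positivity)]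
    linarith
  have hS : S.Nonempty := Nonempty.image tvNorm hrep
  have := le_csInf hS hfidelity
  rw [div_le_iff₀ (by positivity)] at this
  linarith

/-- Approximation guarantee for local minima. Let `φ` satisfy (A1),
`α > 0`, and suppose `f ∈ W(D)`, i.e. `f = Nμ` pointwise on `D` for some `μ ∈ M(Ω)`;
`‖f‖_{W(D)}` is the infimal total variation norm over representing measures. If `μ̄` is
any local minimum (in the total variation norm) of `J(μ) = L(μ) + α Φ(μ)` with
`L(μ) = (1/2)‖Nμ - y‖²_{L²(D,ν)}`, then
`‖Nμ̄ - f‖²_{L²(D,ν)} ≤ 2 α ‖f‖_{W(D)} + ‖y - f‖²_{L²(D,ν)}`. -/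
theorem local_min_fidelity_estimate (d : ℕ)
    (Ω : Set (EuclideanSpace ℝ (Fin (d + 1)))) (hΩ : IsCompact Ω)
    (D : Set (EuclideanSpace ℝ (Fin d)))
    (ν : Measure ↥D) [IsProbabilityMeasure ν]
    (hmom : Integrable (fun x : ↥D => ‖(x : EuclideanSpace ℝ (Fin d))‖ ^ 2) ν)
    (σ : ↥Ω → ↥D → ℝ)
    (hσcont : Continuous fun p : ↥Ω × ↥D => σ p.1 p.2)
    (Λ : ℝ) (hΛ : 0 < Λ)
    (hLip : ∀ (ω₁ ω₂ : ↥Ω) (x : ↥D),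
      |σ ω₁ x - σ ω₂ x| ≤ Λ * ‖(x : EuclideanSpace ℝ (Fin d))‖ *
        ‖(ω₁ : EuclideanSpace ℝ (Fin (d + 1))) - (ω₂ : EuclideanSpace ℝ (Fin (d + 1)))‖)
    (hbdd : ∃ C : ℝ, ∀ ω : ↥Ω, eLpNorm (σ ω) 2 ν ≤ ENNReal.ofReal C)
    (y : ↥D → ℝ) (hy : MemLp y 2 ν)
    (φ φD : ℝ → ℝ) (γ : ℝ) (hA1 : A1 φ φD γ)
    (α : ℝ) (hα : 0 < α)
    (f : ↥D → ℝ)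
    (hrep : ∃ μf : SignedMeasure ↥Ω, ∀ x : ↥D, Nnet σ μf x = f x)
    (μbar : SignedMeasure ↥Ω)
    (hloc : ∃ ε > 0, ∀ μ : SignedMeasure ↥Ω, tvNorm (μ - μbar) ≤ ε →
      Lloss ν σ y μbar + α * PhiPen φ μbar ≤ Lloss ν σ y μ + α * PhiPen φ μ) :
    ∫ x, (Nnet σ μbar x - f x) ^ 2 ∂ν ≤
      2 * α * sInf (tvNorm '' {μf : SignedMeasure ↥Ω | ∀ x : ↥D, Nnet σ μf x = f x}) +
        ∫ x, (y x - f x) ^ 2 ∂ν :=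
  local_min_fidelity_estimate_general d Ω hΩ D ν hmom σ hσcont Λ hLip hbdd y hy φ φD γ hA1 α hα f
    hrep μbar hloc
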